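/- Let d ≥ 2, T ∈ (0,π], 0 < t₀ < T₀ ≤ T with T₀ < π, and ρ ∈ W(T,t₀,T₀). Then there exist constants 0 < c ≤ C, depending only on d, ρ, T, t₀, T₀, such that c·t^{d−1} ≤ z_t ≤ C·t^{d−1} for every t ∈ (0,T]. -/

import Mathlib

open MeasureTheory Real Filter
open scoped ENNReal NNReal ComplexConjugate

noncomputable section

abbrev Sphere (d : ℕ) : Type := ↥(Metric.sphere (0 : EuclideanSpace ℝ (Fin d)) 1)

def sphereMeasure (d : ℕ) : Measure (Sphere d) := μH[(d : ℝ) - 1]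

def sphereVol (d : ℕ) : ℝ := (sphereMeasure d Set.univ).toReal

/-- Membership in the weight class `W(T, t₀, T₀)`. -/
def memW (T t₀ T₀ : ℝ) (ρ : ℝ → ℝ) : Prop :=
  MemLp ρ 2 (volume.restrict (Set.Ioc (0 : ℝ) T)) ∧
    (∀ᵐ θ ∂(volume.restrict (Set.Ioc (0 : ℝ) T)), 0 ≤ ρ θ) ∧
    0 < ∫ θ in t₀..T₀, ρ θ

/-- The normalizing constant `z_t`. -/
def zt (d : ℕ) (T : ℝ) (ρ : ℝ → ℝ) (t : ℝ) : ℝ :=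
  sphereVol (d - 1) * (t / T) * ∫ θ in (0 : ℝ)..T, (Real.sin (t * θ / T)) ^ (d - 2) * ρ θ

/-- The spherical cap `C(ξ, t)`. -/
def cap (d : ℕ) (ξ : Sphere d) (t : ℝ) : Set (Sphere d) :=
  {η | Real.cos t ≤ inner (𝕜 := ℝ) (ξ : EuclideanSpace ℝ (Fin d)) (η : EuclideanSpace ℝ (Fin d))}

/-- The generalized average `A_t^ρ f (ξ)`. -/
def avg (d : ℕ) (T : ℝ) (ρ : ℝ → ℝ) (f : Sphere d → ℂ) (t : ℝ) (ξ : Sphere d) : ℂ :=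
  (zt d T ρ t : ℂ)⁻¹ *
    ∫ η in cap d ξ t,
      (ρ ((T / t) * Real.arccos (inner (𝕜 := ℝ) (ξ : EuclideanSpace ℝ (Fin d))
        (η : EuclideanSpace ℝ (Fin d)))) : ℂ) * f η ∂(sphereMeasure d)

/-- The Legendre polynomial `P_{l,d}` of degree `l` in dimension `d`. -/
def LegendreP (d l : ℕ) (s : ℝ) : ℝ :=
  (l.factorial : ℝ) * Real.Gamma (((d : ℝ) - 1) / 2) *
    ∑ k ∈ Finset.range (l / 2 + 1),
      (-1) ^ k * (1 - s ^ 2) ^ k * s ^ (l - 2 * k) /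
        (4 ^ k * (k.factorial : ℝ) * ((l - 2 * k).factorial : ℝ) *
          Real.Gamma ((k : ℝ) + ((d : ℝ) - 1) / 2))

/-- `c_{k,l} = (-1)^k P_{l,d}^{(k)}(1) / k!`. -/
def legCoeff (d k l : ℕ) : ℝ :=
  (-1) ^ k * iteratedDeriv k (LegendreP d l) 1 / (k.factorial : ℝ)

/-- The multiplier `m_{l,t}^ρ`. -/
def mlt (d : ℕ) (T : ℝ) (ρ : ℝ → ℝ) (l : ℕ) (t : ℝ) : ℝ :=
  sphereVol (d - 1) / zt d T ρ t * (t / T) *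
    ∫ θ in (0 : ℝ)..T,
      LegendreP d l (Real.cos (t * θ / T)) * (Real.sin (t * θ / T)) ^ (d - 2) * ρ θ

/-- `B_k^ρ(t) = A_t^ρ(|ξ-·|^{2k})(ξ)`. -/
def Bk (d : ℕ) (T : ℝ) (ρ : ℝ → ℝ) (k : ℕ) (t : ℝ) : ℝ :=
  2 ^ k * (sphereVol (d - 1) / zt d T ρ t) * (t / T) *
    ∫ θ in (0 : ℝ)..T,
      (1 - Real.cos (t * θ / T)) ^ k * (Real.sin (t * θ / T)) ^ (d - 2) * ρ θ

/-- `M_{n,l,t}^ρ`. -/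
def Mnlt (d : ℕ) (T : ℝ) (ρ : ℝ → ℝ) (n l : ℕ) (t : ℝ) : ℝ :=
  mlt d T ρ l t - ∑ k ∈ Finset.range (n + 1), legCoeff d k l / 2 ^ k * Bk d T ρ k t

/-- `N_{n,l,t}^ρ`. -/
def Nnlt (d : ℕ) (T : ℝ) (ρ : ℝ → ℝ) (n l : ℕ) (t : ℝ) : ℝ :=
  Mnlt d T ρ (n - 1) l t - legCoeff d n l / 2 ^ n * Bk d T ρ n t * mlt d T ρ l t

/-- `I_{α,n}^{ρ,T}(l)`. -/
def Ifun (d : ℕ) (T : ℝ) (ρ : ℝ → ℝ) (n : ℕ) (α : ℝ) (l : ℕ) : ℝ≥0∞ :=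
  ∫⁻ t in Set.Ioc (0 : ℝ) T, ENNReal.ofReal (|Mnlt d T ρ n l t| ^ 2 / t ^ (2 * α + 1))

/-- `J_n^{ρ,T}(l)`. -/
def Jfun (d : ℕ) (T : ℝ) (ρ : ℝ → ℝ) (n l : ℕ) : ℝ≥0∞ :=
  ∫⁻ t in Set.Ioc (0 : ℝ) T, ENNReal.ofReal (|Nnlt d T ρ n l t| ^ 2 / t ^ (4 * n + 1))

/-- A spherical harmonic of degree `l`: the restriction to the sphere of a harmonic
homogeneous polynomial of degree `l` on `ℝ^d`. -/
def IsSphericalHarmonic (d l : ℕ) (Y : Sphere d → ℂ) : Prop :=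
  ∃ p : MvPolynomial (Fin d) ℂ, p.IsHomogeneous l ∧
    (∑ i : Fin d, MvPolynomial.pderiv i (MvPolynomial.pderiv i p)) = 0 ∧
    ∀ η : Sphere d,
      Y η = MvPolynomial.eval
        (fun i => (((η : EuclideanSpace ℝ (Fin d)) i : ℝ) : ℂ)) p

/-- A complete orthonormal system of spherical harmonics on `S^{d-1}`. -/
structure SHBasis (d : ℕ) where
  ν : ℕ → ℕ
  Y : (l : ℕ) → Fin (ν l) → Sphere d → ℂ
  harmonic : ∀ l j, IsSphericalHarmonic d l (Y l j)
  orthonormal : ∀ l j l' j',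
    (∫ η, Y l j η * conj (Y l' j' η) ∂(sphereMeasure d)) =
      if l = l' ∧ (j : ℕ) = (j' : ℕ) then 1 else 0
  complete : ∀ f : Sphere d → ℂ, MemLp f 2 (sphereMeasure d) →
    (∀ l j, (∫ η, f η * conj (Y l j η) ∂(sphereMeasure d)) = 0) →
    f =ᵐ[sphereMeasure d] 0

/-- The Fourier coefficient `f̂_{lj}` with respect to a spherical harmonic basis. -/
def shCoeff (d : ℕ) (B : SHBasis d) (f : Sphere d → ℂ) (l : ℕ) (j : Fin (B.ν l)) : ℂ :=
  ∫ η, f η * conj (B.Y l j η) ∂(sphereMeasure d)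

/-- Membership in the Sobolev space `H^α(S^{d-1})`. -/
def MemSobolev (d : ℕ) (B : SHBasis d) (α : ℝ) (f : Sphere d → ℂ) : Prop :=
  MemLp f 2 (sphereMeasure d) ∧
    Summable (fun l : ℕ =>
      (1 + Real.sqrt l * Real.sqrt ((l : ℝ) + d - 2)) ^ (2 * α) *
        ∑ j, ‖shCoeff d B f l j‖ ^ 2)

/-- The function `η ↦ |ξ - η|^{2k}` on the sphere, as a complex-valued function. -/
def distPow (d : ℕ) (ξ : Sphere d) (k : ℕ) : Sphere d → ℂ :=
  fun η => ((‖(ξ : EuclideanSpace ℝ (Fin d)) - (η : EuclideanSpace ℝ (Fin d))‖ ^ (2 * k) : ℝ) : ℂ)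

/-- The square of the generalized square function `S_α^{ρ,T}(f, g₁, …, g_n)(ξ)`,
valued in `ℝ≥0∞`.  For `α = 2n` the modified (endpoint) definition is used. -/
def sqFnSq (d : ℕ) (T : ℝ) (ρ : ℝ → ℝ) (n : ℕ) (α : ℝ)
    (f : Sphere d → ℂ) (g : ℕ → Sphere d → ℂ) (ξ : Sphere d) : ℝ≥0∞ :=
  if α = 2 * n then
    ∫⁻ t in Set.Ioc (0 : ℝ) T, ENNReal.ofReal
      (‖avg d T ρ f t ξ - f ξ -
          (∑ k ∈ Finset.Icc 1 (n - 1), g k ξ * avg d T ρ (distPow d ξ k) t ξ) -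
          avg d T ρ (g n) t ξ * avg d T ρ (distPow d ξ n) t ξ‖ ^ 2 / t ^ (2 * α + 1))
  else
    ∫⁻ t in Set.Ioc (0 : ℝ) T, ENNReal.ofReal
      (‖avg d T ρ f t ξ - f ξ -
          ∑ k ∈ Finset.Icc 1 n, g k ξ * avg d T ρ (distPow d ξ k) t ξ‖ ^ 2 / t ^ (2 * α + 1))

/-- Condition (⋆) on the weight `ρ`. -/
def starCond (d n : ℕ) (T T₀ : ℝ) (ρ : ℝ → ℝ) : Prop :=
  ((d : ℝ) - 1) / ((d : ℝ) + 2 * n - 1) *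
      ((∫ θ in (0 : ℝ)..T, θ ^ (d - 2) * ρ θ) ^ 2 *
        ∫ θ in (0 : ℝ)..T, θ ^ (2 * n + d) * ρ θ) /
      ((∫ θ in (0 : ℝ)..T₀, θ ^ (d - 2) * ρ θ) * (∫ θ in (0 : ℝ)..T₀, θ ^ d * ρ θ) *
        ∫ θ in (0 : ℝ)..T₀, θ ^ (2 * n + d - 2) * ρ θ) < 1

/-- `k_{d,n}(l)`. -/
def kdn (d n l : ℕ) : ℝ :=
  if l = n then 1 / 2
  else (2 * (n : ℝ) + d - 1) / (((l : ℝ) + n + d - 2) * ((l : ℝ) - n))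

/-- The angle `a_{d,n,ε}(l)` defined by `cos a = 1 - ε k_{d,n}(l)`. -/
def adn (d n : ℕ) (ε : ℝ) (l : ℕ) : ℝ := Real.arccos (1 - ε * kdn d n l)

/-- The Poisson kernel `p_r(η, ξ)` on `S^{d-1}`. -/
def poissonKernelS (d : ℕ) (r : ℝ) (η ξ : Sphere d) : ℝ :=
  (1 - r ^ 2) /
    (sphereVol d *
      ‖r • (ξ : EuclideanSpace ℝ (Fin d)) - (η : EuclideanSpace ℝ (Fin d))‖ ^ d)

/-- The Poisson transform `P_r f` of a complex-valued function. -/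
def poisson (d : ℕ) (r : ℝ) (f : Sphere d → ℂ) (ξ : Sphere d) : ℂ :=
  ∫ η, (poissonKernelS d r η ξ : ℂ) * f η ∂(sphereMeasure d)

/-- The Poisson transform `P_r u` of a real-valued function. -/
def poissonR (d : ℕ) (r : ℝ) (u : Sphere d → ℝ) (ξ : Sphere d) : ℝ :=
  ∫ η, poissonKernelS d r η ξ * u η ∂(sphereMeasure d)

lemma chord {T₀ x : ℝ} (hT₀ : 0 < T₀) (hT₀π : T₀ ≤ π) (hx0 : 0 ≤ x) (hx : x ≤ T₀) :
    Real.sin T₀ / T₀ * x ≤ Real.sin x := by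
  have ha : (0:ℝ) ≤ 1 - x / T₀ := by rw [sub_nonneg]; exact div_le_one_of_le₀ hx hT₀.le
  have hb : (0:ℝ) ≤ x / T₀ := by positivity
  have hab : (1 - x / T₀) + x / T₀ = 1 := by ring
  have h := strictConcaveOn_sin_Icc.concaveOn.2 (x := 0) (y := T₀)
    ⟨le_rfl, Real.pi_pos.le⟩ ⟨hT₀.le, hT₀π⟩ ha hb hab
  have hxx : (1 - x / T₀) • (0:ℝ) + (x / T₀) • T₀ = x := by
    rw [smul_eq_mul, smul_eq_mul, mul_zero, zero_add, div_mul_cancel₀ x hT₀.ne']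
  rw [hxx] at h
  calc Real.sin T₀ / T₀ * x = (1 - x / T₀) • Real.sin 0 + (x / T₀) • Real.sin T₀ := by
        rw [Real.sin_zero]; simp [smul_eq_mul]; ring
    _ ≤ Real.sin x := h


lemma enormsq {n : ℕ} (x : EuclideanSpace ℝ (Fin n)) : ‖x‖ ^ 2 = ∑ i, x i ^ 2 := by
  rw [EuclideanSpace.norm_eq, Real.sq_sqrt (by positivity)]
  simp [Real.norm_eq_abs, sq_abs]

lemma radial_lip {E : Type*} [NormedAddCommGroup E] [NormedSpace ℝ E] {x y : E}
    (hx : 1 ≤ ‖x‖) (hy : 1 ≤ ‖y‖) : ‖‖x‖⁻¹ • x - ‖y‖⁻¹ • y‖ ≤ 2 * ‖x - y‖ := by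
  have hx0 : (0:ℝ) < ‖x‖ := lt_of_lt_of_le one_pos hx
  have hy0 : (0:ℝ) < ‖y‖ := lt_of_lt_of_le one_pos hy
  have key : ‖x‖⁻¹ • x - ‖y‖⁻¹ • y = ‖x‖⁻¹ • (x - y) + (‖x‖⁻¹ - ‖y‖⁻¹) • y := by
    rw [smul_sub, sub_smul]; abel
  rw [key]
  have h1 : ‖‖x‖⁻¹ • (x - y)‖ ≤ ‖x - y‖ := by
    rw [norm_smul, Real.norm_eq_abs, abs_of_nonneg (by positivity)]
    calc ‖x‖⁻¹ * ‖x - y‖ ≤ 1 * ‖x - y‖ := by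
          apply mul_le_mul_of_nonneg_right _ (norm_nonneg _)
          exact inv_le_one_of_one_le₀ hx
      _ = ‖x - y‖ := one_mul _
  have h2 : ‖(‖x‖⁻¹ - ‖y‖⁻¹) • y‖ ≤ ‖x - y‖ := by
    rw [norm_smul, Real.norm_eq_abs]
    have heq : ‖x‖⁻¹ - ‖y‖⁻¹ = (‖y‖ - ‖x‖) / (‖x‖ * ‖y‖) := by
      field_simp
    rw [heq, abs_div, abs_of_pos (mul_pos hx0 hy0)]
    calc |‖y‖ - ‖x‖| / (‖x‖ * ‖y‖) * ‖y‖ = |‖y‖ - ‖x‖| / ‖x‖ := by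
          field_simp
      _ ≤ |‖y‖ - ‖x‖| / 1 := by
          apply div_le_div_of_nonneg_left (abs_nonneg _) one_pos hx
      _ = |‖y‖ - ‖x‖| := div_one _
      _ ≤ ‖y - x‖ := abs_norm_sub_norm_le y x
      _ = ‖x - y‖ := norm_sub_rev y x
  calc ‖‖x‖⁻¹ • (x - y) + (‖x‖⁻¹ - ‖y‖⁻¹) • y‖
      ≤ ‖‖x‖⁻¹ • (x - y)‖ + ‖(‖x‖⁻¹ - ‖y‖⁻¹) • y‖ := norm_add_le _ _
    _ ≤ 2 * ‖x - y‖ := by linarith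

lemma hausdorff_closedBall_pos (m : ℕ) :
    0 < μH[(m:ℝ)] (Metric.closedBall (0 : EuclideanSpace ℝ (Fin m)) 1) := by
  set a : ℝ := 1 / (m + 1) with ha
  have ha0 : 0 < a := by positivity
  have hlip : LipschitzWith 1 (WithLp.equiv 2 (Fin m → ℝ)) := PiLp.lipschitzWith_ofLp 2 _
  have him := hlip.hausdorffMeasure_image_le (d := (m:ℝ)) (by positivity)
    (Metric.closedBall (0 : EuclideanSpace ℝ (Fin m)) 1)
  rw [ENNReal.coe_one, ENNReal.one_rpow, one_mul] at him
  have hpi : (μH[(m:ℝ)] : Measure (Fin m → ℝ)) = volume := by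
    have := hausdorffMeasure_pi_real (ι := Fin m)
    simpa using this
  have hsub : Set.Icc (fun _ => -a : Fin m → ℝ) (fun _ => a) ⊆
      (WithLp.equiv 2 (Fin m → ℝ)) '' Metric.closedBall 0 1 := by
    intro x hx
    refine ⟨(WithLp.equiv 2 (Fin m → ℝ)).symm x, ?_, by simp⟩
    rw [Metric.mem_closedBall, dist_zero_right]
    have hn : ‖(WithLp.equiv 2 (Fin m → ℝ)).symm x‖ ^ 2 ≤ 1 := by
      rw [enormsq]
      have : ∀ i, ((WithLp.equiv 2 (Fin m → ℝ)).symm x) i ^ 2 ≤ a ^ 2 := by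
        intro i
        have h1 : -a ≤ x i := hx.1 i
        have h2 : x i ≤ a := hx.2 i
        have hxi : ((WithLp.equiv 2 (Fin m → ℝ)).symm x) i = x i := rfl
        rw [hxi]
        nlinarith
      calc ∑ i, ((WithLp.equiv 2 (Fin m → ℝ)).symm x) i ^ 2 ≤ ∑ _i : Fin m, a ^ 2 :=
            Finset.sum_le_sum fun i _ => this i
        _ = m * a ^ 2 := by simp [mul_comm]
        _ ≤ 1 := by
            rw [ha, div_pow, one_pow, mul_one_div, div_le_one (by positivity)]
            nlinarith [Nat.cast_nonneg (α := ℝ) m]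
    nlinarith [norm_nonneg ((WithLp.equiv 2 (Fin m → ℝ)).symm x)]
  have hm : 0 < μH[(m:ℝ)] ((WithLp.equiv 2 (Fin m → ℝ)) '' Metric.closedBall 0 1) := by
    refine lt_of_lt_of_le ?_ (measure_mono hsub)
    rw [hpi, Real.volume_Icc_pi]
    have : ∀ i : Fin m, ENNReal.ofReal ((fun _ => a : Fin m → ℝ) i - (fun _ => -a : Fin m → ℝ) i)
        = ENNReal.ofReal (2 * a) := by intro i; congr 1; show a - -a = 2 * a; ring
    rw [Finset.prod_congr rfl (fun i _ => this i), Finset.prod_const]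
    have h2a : 0 < ENNReal.ofReal (2 * a) := by
      rw [ENNReal.ofReal_pos]; positivity
    positivity
  exact lt_of_lt_of_le hm him

lemma hausdorff_closedBall_lt_top (m : ℕ) (R : ℝ) :
    μH[(m:ℝ)] (Metric.closedBall (0 : EuclideanSpace ℝ (Fin m)) R) < ∞ := by
  have hmono : Metric.closedBall (0 : EuclideanSpace ℝ (Fin m)) R ⊆
      Metric.closedBall 0 (|R| + 1) :=
    Metric.closedBall_subset_closedBall (by linarith [le_abs_self R])
  refine lt_of_le_of_lt (measure_mono hmono) ?_
  set S : ℝ := |R| + 1 with hS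
  have hK := (PiLp.antilipschitzWith_ofLp 2 (fun _ : Fin m => ℝ)).to_rightInverse
    (WithLp.equiv 2 (Fin m → ℝ)).right_inv
  have him := hK.hausdorffMeasure_image_le (d := (m:ℝ)) (by positivity)
    (Set.Icc (fun _ => -S : Fin m → ℝ) (fun _ => S))
  have hpi : (μH[(m:ℝ)] : Measure (Fin m → ℝ)) = volume := by
    simpa using hausdorffMeasure_pi_real (ι := Fin m)
  have hsub : Metric.closedBall (0 : EuclideanSpace ℝ (Fin m)) S ⊆
      ((WithLp.equiv 2 (Fin m → ℝ)).symm) '' Set.Icc (fun _ => -S) (fun _ => S) := by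
    intro x hx
    rw [Metric.mem_closedBall, dist_zero_right] at hx
    have hco : ∀ i, |x i| ≤ S := by
      intro i
      have h1 : x i ^ 2 ≤ ‖x‖ ^ 2 := by
        rw [enormsq]
        exact Finset.single_le_sum (f := fun j => x j ^ 2)
          (fun j _ => sq_nonneg _) (Finset.mem_univ i)
      have h2 : |x i| ≤ ‖x‖ := by
        rw [← Real.sqrt_sq_eq_abs]
        calc Real.sqrt (x i ^ 2) ≤ Real.sqrt (‖x‖ ^ 2) := Real.sqrt_le_sqrt h1
          _ = ‖x‖ := Real.sqrt_sq (norm_nonneg _)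
      exact h2.trans hx
    exact ⟨WithLp.equiv 2 (Fin m → ℝ) x,
      ⟨fun i => (abs_le.1 (hco i)).1, fun i => (abs_le.1 (hco i)).2⟩, by simp⟩
  calc μH[(m:ℝ)] (Metric.closedBall (0 : EuclideanSpace ℝ (Fin m)) S)
      ≤ μH[(m:ℝ)] (((WithLp.equiv 2 (Fin m → ℝ)).symm) ''
          Set.Icc (fun _ => -S) (fun _ => S)) := measure_mono hsub
    _ ≤ _ * μH[(m:ℝ)] (Set.Icc (fun _ => -S : Fin m → ℝ) (fun _ => S)) := him
    _ < ∞ := by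
        apply ENNReal.mul_lt_top
        · exact ENNReal.rpow_lt_top_of_nonneg (by positivity) ENNReal.coe_ne_top
        · rw [hpi, Real.volume_Icc_pi]
          exact ENNReal.prod_lt_top fun i _ => ENNReal.ofReal_lt_top
lemma sphere_hausdorff_pos (m : ℕ) :
    0 < μH[(m:ℝ)] (Metric.sphere (0 : EuclideanSpace ℝ (Fin (m+1))) 1) := by
  set proj : EuclideanSpace ℝ (Fin (m+1)) → EuclideanSpace ℝ (Fin m) :=
    fun x => (WithLp.equiv 2 (Fin m → ℝ)).symm (fun j => x j.castSucc) with hproj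
  have hlip : LipschitzWith 1 proj := by
    apply LipschitzWith.of_dist_le_mul
    intro x y
    push_cast
    rw [one_mul]
    have hxy : ∀ z w : EuclideanSpace ℝ (Fin (m+1)),
        dist (proj z) (proj w) ^ 2 = ∑ j : Fin m, dist (z j.castSucc) (w j.castSucc) ^ 2 := by
      intro z w
      rw [EuclideanSpace.dist_eq, Real.sq_sqrt (by positivity)]
      exact Finset.sum_congr rfl fun j _ => rfl
    have h2 : dist (proj x) (proj y) ^ 2 ≤ dist x y ^ 2 := by
      rw [hxy, EuclideanSpace.dist_eq, Real.sq_sqrt (by positivity)]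
      rw [Fin.sum_univ_castSucc (f := fun i : Fin (m+1) => dist (x i) (y i) ^ 2)]
      nlinarith [sq_nonneg (dist (x (Fin.last m)) (y (Fin.last m)))]
    nlinarith [dist_nonneg (x := proj x) (y := proj y), dist_nonneg (x := x) (y := y)]
  have hsub : Metric.closedBall (0 : EuclideanSpace ℝ (Fin m)) 1 ⊆
      proj '' Metric.sphere (0 : EuclideanSpace ℝ (Fin (m+1))) 1 := by
    intro y hy
    rw [Metric.mem_closedBall, dist_zero_right] at hy
    set c : ℝ := Real.sqrt (1 - ‖y‖ ^ 2) with hc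
    set x : EuclideanSpace ℝ (Fin (m+1)) :=
      (WithLp.equiv 2 (Fin (m+1) → ℝ)).symm (Fin.snoc (fun j => y j) c) with hx
    have hxc : ∀ j : Fin m, x j.castSucc = y j := by
      intro j
      show (Fin.snoc (fun j => y j) c : Fin (m+1) → ℝ) j.castSucc = y j
      rw [Fin.snoc_castSucc]
    have hxl : x (Fin.last m) = c := by
      show (Fin.snoc (fun j => y j) c : Fin (m+1) → ℝ) (Fin.last m) = c
      rw [Fin.snoc_last]
    refine ⟨x, ?_, ?_⟩
    · rw [Metric.mem_sphere, dist_zero_right]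
      have hn2 : ‖x‖ ^ 2 = 1 := by
        rw [enormsq, Fin.sum_univ_castSucc (f := fun i : Fin (m+1) => x i ^ 2)]
        have : ∑ j : Fin m, x j.castSucc ^ 2 = ‖y‖ ^ 2 := by
          rw [enormsq]
          exact Finset.sum_congr rfl fun j _ => by rw [hxc j]
        rw [this, hxl, hc, Real.sq_sqrt (by nlinarith [norm_nonneg y])]
        ring
      nlinarith [norm_nonneg x]
    · show (WithLp.equiv 2 (Fin m → ℝ)).symm (fun j => x j.castSucc) = y
      have : (fun j => x j.castSucc) = fun j : Fin m => y j := funext fun j => hxc j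
      rw [this]
      rfl
  have h1 := hlip.hausdorffMeasure_image_le (d := (m:ℝ)) (by positivity)
    (Metric.sphere (0 : EuclideanSpace ℝ (Fin (m+1))) 1)
  rw [ENNReal.coe_one, ENNReal.one_rpow, one_mul] at h1
  exact lt_of_lt_of_le (lt_of_lt_of_le (hausdorff_closedBall_pos m) (measure_mono hsub)) h1

lemma sphere_hausdorff_lt_top (m : ℕ) :
    μH[(m:ℝ)] (Metric.sphere (0 : EuclideanSpace ℝ (Fin (m+1))) 1) < ∞ := by
  classical
  set E := EuclideanSpace ℝ (Fin (m+1))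
  set F := EuclideanSpace ℝ (Fin m)
  set sgn : Bool → ℝ := fun b => if b then 1 else -1 with hsgn
  set ins : Fin (m+1) → Bool → F → E := fun i b y =>
    (WithLp.equiv 2 (Fin (m+1) → ℝ)).symm (i.insertNth (sgn b) (fun j => y j)) with hins
  set g : Fin (m+1) → Bool → F → E := fun i b y => ‖ins i b y‖⁻¹ • ins i b y with hg
  set B : Set F := Metric.closedBall 0 (m+1) with hB
  -- coordinates of ins
  have hins_same : ∀ i b y, ins i b y i = sgn b := by
    intro i b y
    show (i.insertNth (sgn b) (fun j => y j) : Fin (m+1) → ℝ) i = sgn b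
    rw [Fin.insertNth_apply_same]
  have hins_above : ∀ i b y j, ins i b y (i.succAbove j) = y j := by
    intro i b y j
    show (i.insertNth (sgn b) (fun j => y j) : Fin (m+1) → ℝ) (i.succAbove j) = y j
    rw [Fin.insertNth_apply_succAbove]
  -- norm of ins
  have hins_norm : ∀ i b y, ‖ins i b y‖ ^ 2 = 1 + ‖y‖ ^ 2 := by
    intro i b y
    rw [enormsq, Fin.sum_univ_succAbove (fun k => ins i b y k ^ 2) i, hins_same]
    have h1 : sgn b ^ 2 = 1 := by rcases b with _ | _ <;> simp [hsgn]
    have h2 : ∑ j : Fin m, ins i b y (i.succAbove j) ^ 2 = ‖y‖ ^ 2 := by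
      rw [enormsq]
      exact Finset.sum_congr rfl fun j _ => by rw [hins_above]
    rw [h1, h2]
  have hins_one_le : ∀ i b y, 1 ≤ ‖ins i b y‖ := by
    intro i b y
    nlinarith [hins_norm i b y, norm_nonneg (ins i b y), norm_nonneg y, sq_nonneg ‖y‖]
  -- ins is an isometry (distance preserving)
  have hins_dist : ∀ i b y z, dist (ins i b y) (ins i b z) = dist y z := by
    intro i b y z
    rw [EuclideanSpace.dist_eq, EuclideanSpace.dist_eq]
    congr 1
    rw [Fin.sum_univ_succAbove (fun k => dist (ins i b y k) (ins i b z k) ^ 2) i]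
    rw [hins_same, hins_same]
    simp only [dist_self, ne_eq, OfNat.ofNat_ne_zero, not_false_eq_true, zero_pow, zero_add]
    exact Finset.sum_congr rfl fun j _ => by rw [hins_above, hins_above]
  -- g is Lipschitz on B
  have hglip : ∀ i b, LipschitzOnWith 2 (g i b) B := by
    intro i b
    rw [lipschitzOnWith_iff_dist_le_mul]
    intro y _ z _
    have h := radial_lip (hins_one_le i b y) (hins_one_le i b z)
    rw [hg]
    simp only []
    rw [dist_eq_norm, dist_eq_norm] at *
    push_cast
    calc ‖‖ins i b y‖⁻¹ • ins i b y - ‖ins i b z‖⁻¹ • ins i b z‖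
        ≤ 2 * ‖ins i b y - ins i b z‖ := h
      _ = 2 * ‖y - z‖ := by
          rw [← dist_eq_norm, ← dist_eq_norm, hins_dist]
  -- coverage
  have hcover : Metric.sphere (0 : E) 1 ⊆ ⋃ p : Fin (m+1) × Bool, g p.1 p.2 '' B := by
    intro x hx
    rw [Metric.mem_sphere, dist_zero_right] at hx
    obtain ⟨i, -, hi⟩ := Finset.exists_max_image Finset.univ (fun j => |x j|)
      ⟨0, Finset.mem_univ 0⟩
    have hnx2 : ‖x‖ ^ 2 = 1 := by rw [hx]; norm_num
    have hsum : ∑ j, x j ^ 2 = 1 := by rw [← enormsq, hnx2]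
    have hxi : x i ≠ 0 := by
      intro h0
      have : ∀ j, x j = 0 := by
        intro j
        have := hi j (Finset.mem_univ j)
        rw [h0, abs_zero, abs_nonpos_iff] at this
        exact this
      have : ∑ j, x j ^ 2 = 0 := Finset.sum_eq_zero fun j _ => by rw [this j]; ring
      rw [hsum] at this; norm_num at this
    have hxi2 : 1 ≤ (m+1 : ℝ) * x i ^ 2 := by
      have : ∑ j, x j ^ 2 ≤ ∑ _j : Fin (m+1), x i ^ 2 := by
        refine Finset.sum_le_sum fun j _ => ?_
        have := hi j (Finset.mem_univ j)
        calc x j ^ 2 = |x j| ^ 2 := (sq_abs _).symm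
          _ ≤ |x i| ^ 2 := by nlinarith [abs_nonneg (x j)]
          _ = x i ^ 2 := sq_abs _
      rw [hsum] at this
      simpa [Finset.sum_const, Finset.card_univ] using this
    set b : Bool := decide (0 ≤ x i) with hb
    have hsgnb : sgn b = x i / |x i| := by
      rcases le_or_gt 0 (x i) with h | h
      · have : b = true := by rw [hb]; simp [h]
        rw [this, abs_of_nonneg h, div_self hxi]
        simp [hsgn]
      · have : b = false := by rw [hb]; simp [not_le.2 h]
        rw [this, abs_of_neg h, div_neg, div_self hxi]
        simp [hsgn]
    set y : F := (WithLp.equiv 2 (Fin m → ℝ)).symm (fun j => x (i.succAbove j) * |x i|⁻¹)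
      with hy
    have habs : (0:ℝ) < |x i| := abs_pos.2 hxi
    have hyB : y ∈ B := by
      rw [hB, Metric.mem_closedBall, dist_zero_right]
      have hny : ‖y‖ ^ 2 ≤ (m+1 : ℝ) := by
        rw [enormsq]
        have hyj : ∀ j, y j = x (i.succAbove j) * |x i|⁻¹ := fun j => rfl
        have : ∑ j : Fin m, y j ^ 2 = (∑ j : Fin m, x (i.succAbove j) ^ 2) * (x i ^ 2)⁻¹ := by
          rw [Finset.sum_mul]
          refine Finset.sum_congr rfl fun j _ => ?_
          rw [hyj j, mul_pow, inv_pow, sq_abs]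
        rw [this]
        have hsplit : x i ^ 2 + ∑ j : Fin m, x (i.succAbove j) ^ 2 = 1 := by
          rw [← Fin.sum_univ_succAbove (fun k => x k ^ 2) i, hsum]
        have h1 : ∑ j : Fin m, x (i.succAbove j) ^ 2 ≤ 1 := by nlinarith [sq_nonneg (x i)]
        have h2 : (x i ^ 2)⁻¹ ≤ (m+1 : ℝ) := by
          have hp : (0:ℝ) < (m:ℝ)+1 := by positivity
          rw [inv_le_comm₀ (by positivity) hp]
          have h := mul_le_mul_of_nonneg_left hxi2 (inv_pos.2 hp).le
          rw [mul_one, ← mul_assoc, inv_mul_cancel₀ hp.ne', one_mul] at h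
          exact h
        have h3 : (0:ℝ) ≤ ∑ j : Fin m, x (i.succAbove j) ^ 2 :=
          Finset.sum_nonneg fun j _ => sq_nonneg _
        calc (∑ j : Fin m, x (i.succAbove j) ^ 2) * (x i ^ 2)⁻¹ ≤ 1 * (m+1:ℝ) := by
              apply mul_le_mul h1 h2 (by positivity) (by norm_num)
          _ = (m+1:ℝ) := one_mul _
      nlinarith [norm_nonneg y]
    refine Set.mem_iUnion.2 ⟨⟨i, b⟩, ⟨y, hyB, ?_⟩⟩
    -- g i b y = x
    have hinseq : ins i b y = |x i|⁻¹ • x := by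
      ext k
      rcases eq_or_ne k i with rfl | hki
      · rw [hins_same, hsgnb]
        show x k / |x k| = |x k|⁻¹ * x k
        ring
      · obtain ⟨j, rfl⟩ := Fin.exists_succAbove_eq hki
        rw [hins_above]
        show x (i.succAbove j) * |x i|⁻¹ = |x i|⁻¹ * x (i.succAbove j)
        ring
    rw [hg]
    simp only []
    rw [hinseq]
    rw [norm_smul, Real.norm_eq_abs, abs_of_pos (inv_pos.2 habs), hx, mul_one]
    rw [inv_inv, smul_smul, mul_inv_cancel₀ habs.ne', one_smul]
  -- conclude
  refine lt_of_le_of_lt (measure_mono hcover) ?_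
  refine lt_of_le_of_lt (measure_iUnion_le _) ?_
  rw [tsum_fintype]
  refine ENNReal.sum_lt_top.2 fun p _ => ?_
  refine lt_of_le_of_lt ((hglip p.1 p.2).hausdorffMeasure_image_le (by positivity)) ?_
  exact ENNReal.mul_lt_top
    (ENNReal.rpow_lt_top_of_nonneg (by positivity) ENNReal.coe_ne_top)
    (hausdorff_closedBall_lt_top m (m+1))

lemma sphereMeasure_univ_eq (e : ℕ) :
    sphereMeasure (e+1) Set.univ
      = μH[(e:ℝ)] (Metric.sphere (0 : EuclideanSpace ℝ (Fin (e+1))) 1) := by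
  have hc : ((e + 1 : ℕ) : ℝ) - 1 = (e : ℝ) := by push_cast; ring
  rw [sphereMeasure, hc]
  calc (μH[(e:ℝ)] : Measure (Sphere (e+1))) Set.univ
      = μH[(e:ℝ)] ((Subtype.val : Sphere (e+1) → EuclideanSpace ℝ (Fin (e+1))) ''
          Set.univ) :=
        (isometry_subtype_coe.hausdorffMeasure_image
          (Or.inl (by positivity)) Set.univ).symm
    _ = _ := by rw [Set.image_univ, Subtype.range_coe]


lemma sphereVol_succ_pos (e : ℕ) : 0 < sphereVol (e + 1) := by
  rw [sphereVol, sphereMeasure_univ_eq]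
  exact ENNReal.toReal_pos (sphere_hausdorff_pos e).ne' (sphere_hausdorff_lt_top e).ne


/-- The normalizing constant satisfies `z_t ∼ t^(d-1)` uniformly for `t ∈ (0, T]`. -/
theorem zt_comparable_rpow
    (d : ℕ) (hd : 2 ≤ d)
    (T t₀ T₀ : ℝ) (hT0 : 0 < T) (hTπ : T ≤ π)
    (ht₀ : 0 < t₀) (ht₀T₀ : t₀ < T₀) (hT₀T : T₀ ≤ T) (hT₀π : T₀ < π)
    (ρ : ℝ → ℝ) (hρ : memW T t₀ T₀ ρ) :
    ∃ c C : ℝ, 0 < c ∧ c ≤ C ∧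
      ∀ t ∈ Set.Ioc (0 : ℝ) T,
        c * t ^ (d - 1) ≤ zt d T ρ t ∧ zt d T ρ t ≤ C * t ^ (d - 1) := by
  obtain ⟨e, rfl⟩ : ∃ e, d = e + 2 := ⟨d - 2, by omega⟩
  have hd1 : e + 2 - 1 = e + 1 := rfl
  have hd2 : e + 2 - 2 = e := rfl
  set S : ℝ := sphereVol (e + 1) with hSdef
  have hS : 0 < S := sphereVol_succ_pos e
  set μT := volume.restrict (Set.Ioc (0:ℝ) T) with hμT
  haveI : IsFiniteMeasure μT :=
    ⟨by rw [hμT, Measure.restrict_apply_univ]; exact measure_Ioc_lt_top⟩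
  have hρint : Integrable ρ μT := hρ.1.integrable one_le_two
  have hρmeas : AEStronglyMeasurable ρ μT := hρ.1.aestronglyMeasurable
  have hρ0 : ∀ᵐ θ ∂μT, 0 ≤ ρ θ := hρ.2.1
  have hT₀0 : 0 < T₀ := ht₀.trans ht₀T₀
  -- integrability helper
  have key : ∀ (f : ℝ → ℝ) (Cf : ℝ), Continuous f → (∀ θ ∈ Set.Ioc (0:ℝ) T, |f θ| ≤ Cf) →
      Integrable (fun θ => f θ * ρ θ) μT := by
    intro f Cf hf hbd
    refine Integrable.mono' ((hρint.abs).const_mul Cf) (hf.aestronglyMeasurable.mul hρmeas) ?_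
    rw [hμT]
    filter_upwards [ae_restrict_mem measurableSet_Ioc] with θ hθ
    rw [Real.norm_eq_abs, abs_mul]
    exact mul_le_mul_of_nonneg_right (hbd θ hθ) (abs_nonneg _)
  set κ : ℝ := Real.sin T₀ / T₀ with hκdef
  have hκ : 0 < κ := div_pos (Real.sin_pos_of_pos_of_lt_pi hT₀0 hT₀π) hT₀0
  set A : ℝ := ∫ θ in Set.Ioc (0:ℝ) T, θ ^ e * ρ θ with hAdef
  set P : ℝ := ∫ θ in Set.Ioc t₀ T₀, ρ θ with hPdef
  have hP : 0 < P := by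
    have := hρ.2.2
    rwa [intervalIntegral.integral_of_le ht₀T₀.le] at this
  have hAint : Integrable (fun θ => θ ^ e * ρ θ) μT := by
    refine key _ (T ^ e) (continuous_pow e) ?_
    intro θ hθ
    rw [abs_of_nonneg (le_of_lt (pow_pos hθ.1 e))]
    exact pow_le_pow_left₀ hθ.1.le hθ.2 e
  set c : ℝ := S * ((κ * t₀) ^ e * P) / T ^ (e + 1) with hcdef
  set C : ℝ := S * A / T ^ (e + 1) with hCdef
  have hc : 0 < c :=
    div_pos (mul_pos hS (mul_pos (pow_pos (mul_pos hκ ht₀) e) hP)) (pow_pos hT0 (e + 1))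
  have hsub : Set.Ioc t₀ T₀ ⊆ Set.Ioc (0:ℝ) T := Set.Ioc_subset_Ioc ht₀.le hT₀T
  have hmain : ∀ t ∈ Set.Ioc (0:ℝ) T,
      c * t ^ (e + 1) ≤ zt (e+2) T ρ t ∧ zt (e+2) T ρ t ≤ C * t ^ (e + 1) := by
    intro t htmem
    obtain ⟨ht, htT⟩ := htmem
    have htT' : t / T ≤ 1 := div_le_one_of_le₀ htT hT0.le
    have htT0 : 0 < t / T := div_pos ht hT0
    -- properties of u = t * θ / T on Ioc 0 T
    have hsin_int : Integrable (fun θ => Real.sin (t * θ / T) ^ e * ρ θ) μT := by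
      refine key _ 1 ((Real.continuous_sin.comp
        (((continuous_const.mul continuous_id)).div_const T)).pow e) ?_
      intro θ hθ
      rw [abs_pow]
      exact pow_le_one₀ (abs_nonneg _) (Real.abs_sin_le_one _)
    have hzt : zt (e+2) T ρ t = S * (t / T) * ∫ θ in Set.Ioc (0:ℝ) T,
        Real.sin (t * θ / T) ^ e * ρ θ := by
      rw [zt, hd1, hd2, intervalIntegral.integral_of_le hT0.le]
    have hu_mem : ∀ θ ∈ Set.Ioc (0:ℝ) T, 0 ≤ t * θ / T ∧ t * θ / T ≤ θ := by
      intro θ hθ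
      constructor
      · exact div_nonneg (mul_nonneg ht.le hθ.1.le) hT0.le
      · rw [div_le_iff₀ hT0]
        nlinarith [hθ.1, hθ.2]
    -- upper bound
    have hupper : (∫ θ in Set.Ioc (0:ℝ) T, Real.sin (t * θ / T) ^ e * ρ θ)
        ≤ (t / T) ^ e * A := by
      have heq : (t / T) ^ e * A = ∫ θ in Set.Ioc (0:ℝ) T, (t / T) ^ e * (θ ^ e * ρ θ) := by
        rw [hAdef, integral_const_mul]
      rw [heq]
      refine integral_mono_ae hsin_int (hAint.const_mul _) ?_
      filter_upwards [ae_restrict_mem measurableSet_Ioc, hρ0] with θ hθ hρθ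
      have h1 : Real.sin (t * θ / T) ≤ t * θ / T := Real.sin_le (hu_mem θ hθ).1
      have h0 : 0 ≤ Real.sin (t * θ / T) := by
        apply Real.sin_nonneg_of_nonneg_of_le_pi (hu_mem θ hθ).1
        exact le_trans ((hu_mem θ hθ).2.trans hθ.2) hTπ
      have hpow : Real.sin (t * θ / T) ^ e ≤ (t / T) ^ e * θ ^ e := by
        rw [← mul_pow]
        refine pow_le_pow_left₀ h0 ?_ e
        calc Real.sin (t * θ / T) ≤ t * θ / T := h1
          _ = t / T * θ := by ring
      calc Real.sin (t * θ / T) ^ e * ρ θ ≤ ((t / T) ^ e * θ ^ e) * ρ θ :=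
            mul_le_mul_of_nonneg_right hpow hρθ
        _ = (t / T) ^ e * (θ ^ e * ρ θ) := by ring
    -- lower bound
    have hnonneg : 0 ≤ᵐ[μT] fun θ => Real.sin (t * θ / T) ^ e * ρ θ := by
      rw [hμT]
      filter_upwards [ae_restrict_mem measurableSet_Ioc, hρ0] with θ hθ hρθ
      have h0 : 0 ≤ Real.sin (t * θ / T) := by
        apply Real.sin_nonneg_of_nonneg_of_le_pi (hu_mem θ hθ).1
        exact le_trans ((hu_mem θ hθ).2.trans hθ.2) hTπ
      exact mul_nonneg (pow_nonneg h0 e) hρθ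
    have hlow1 : (∫ θ in Set.Ioc t₀ T₀, Real.sin (t * θ / T) ^ e * ρ θ)
        ≤ ∫ θ in Set.Ioc (0:ℝ) T, Real.sin (t * θ / T) ^ e * ρ θ := by
      apply setIntegral_mono_set hsin_int hnonneg hsub.eventuallyLE
    have hlow2 : (κ * (t / T) * t₀) ^ e * P
        ≤ ∫ θ in Set.Ioc t₀ T₀, Real.sin (t * θ / T) ^ e * ρ θ := by
      have heq : (κ * (t / T) * t₀) ^ e * P
          = ∫ θ in Set.Ioc t₀ T₀, (κ * (t / T) * t₀) ^ e * ρ θ := by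
        rw [hPdef, integral_const_mul]
      rw [heq]
      refine integral_mono_ae ((hρint.mono_measure
          (Measure.restrict_mono hsub le_rfl)).const_mul _)
        (hsin_int.mono_measure (Measure.restrict_mono hsub le_rfl)) ?_
      have hρ0' : ∀ᵐ θ ∂(volume.restrict (Set.Ioc t₀ T₀)), 0 ≤ ρ θ :=
        ae_restrict_of_ae_restrict_of_subset hsub hρ0
      filter_upwards [ae_restrict_mem measurableSet_Ioc, hρ0'] with θ hθ hρθ
      have hθT : θ ∈ Set.Ioc (0:ℝ) T := hsub hθ
      have hu0 : 0 ≤ t * θ / T := (hu_mem θ hθT).1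
      have huT₀ : t * θ / T ≤ T₀ := le_trans (hu_mem θ hθT).2 hθ.2
      have hchord := chord hT₀0 hT₀π.le hu0 huT₀
      have hub : κ * (t / T) * t₀ ≤ Real.sin (t * θ / T) := by
        calc κ * (t / T) * t₀ ≤ κ * (t / T) * θ := by
              apply mul_le_mul_of_nonneg_left hθ.1.le (mul_pos hκ htT0).le
          _ = κ * (t * θ / T) := by ring
          _ ≤ Real.sin (t * θ / T) := hchord
      refine mul_le_mul_of_nonneg_right ?_ hρθ
      exact pow_le_pow_left₀ (mul_nonneg (mul_pos hκ htT0).le ht₀.le) hub e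
    constructor
    · rw [hzt]
      calc c * t ^ (e + 1) = S * (t / T) * ((κ * (t / T) * t₀) ^ e * P) := by
            rw [hcdef]; simp only [mul_pow, div_pow]; field_simp <;> ring
        _ ≤ S * (t / T) * ∫ θ in Set.Ioc (0:ℝ) T, Real.sin (t * θ / T) ^ e * ρ θ := by
            apply mul_le_mul_of_nonneg_left (hlow2.trans hlow1) (mul_pos hS htT0).le
    · rw [hzt]
      calc S * (t / T) * (∫ θ in Set.Ioc (0:ℝ) T, Real.sin (t * θ / T) ^ e * ρ θ)
          ≤ S * (t / T) * ((t / T) ^ e * A) := by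
            apply mul_le_mul_of_nonneg_left hupper (mul_pos hS htT0).le
        _ = C * t ^ (e + 1) := by rw [hCdef]; simp only [mul_pow, div_pow]; field_simp <;> ring
  have hcC : c ≤ C := by
    have h := hmain T ⟨hT0, le_rfl⟩
    have hTpow : 0 < T ^ (e + 1) := pow_pos hT0 (e + 1)
    exact le_of_mul_le_mul_right (h.1.trans h.2) hTpow
  exact ⟨c, C, hc, hcC, hmain⟩


end
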